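/- Corollary (certain reasoning at μ → 1 recovers logical consequence): Let α be an L-sentence and Δ a finite set of L-sentences such that ⟨Δ⟩ = ⟪Δ⟫ and there exists a possible index i with Mᵢ ⊨ Δ. Then L(α|Δ) = 1 if and only if Δ ⊨ α (α is a logical consequence of Δ relative to the family). -/

import Mathlib

open FirstOrder
open scoped Classical

variable {L : FirstOrder.Language} {ι : Type*}

/-- `Sat M α i` means the structure `M i` satisfies the sentence `α` (i.e. `M i ⊨ α`). -/
def Sat (M : ι → Type*) [∀ i, L.Structure (M i)] (α : L.Sentence) (i : ι) : Prop :=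
  FirstOrder.Language.Sentence.Realize (M := M i) α

/-- The indicator `⟦α⟧ᵢ`: `1` if `M i ⊨ α`, `0` otherwise (a natural number). -/
noncomputable def ind (M : ι → Type*) [∀ i, L.Structure (M i)]
    (α : L.Sentence) (i : ι) : ℕ :=
  if Sat M α i then 1 else 0

/-- `M i ⊨ S`: the structure `M i` satisfies every sentence in the finite set `S`. -/
def SatAll (M : ι → Type*) [∀ i, L.Structure (M i)]
    (S : Finset L.Sentence) (i : ι) : Prop :=
  ∀ β ∈ S, Sat M β i

/-- `|Δ|ᵢ`: the number of sentences of `Δ` that are true in `M i`. -/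
noncomputable def nSat (M : ι → Type*) [∀ i, L.Structure (M i)]
    (Δ : Finset L.Sentence) (i : ι) : ℕ :=
  (Δ.filter (fun β => Sat M β i)).card

/-- A finite set `S` of sentences is possible if some possible index satisfies all of it. -/
def PossibleSet (M : ι → Type*) [∀ i, L.Structure (M i)] (p : ι → ℝ)
    (S : Finset L.Sentence) : Prop :=
  ∃ i, 0 < p i ∧ SatAll M S i

/-- `MPS Δ`: the cardinality-maximal possible subsets of `Δ`. -/
def MPS (M : ι → Type*) [∀ i, L.Structure (M i)] (p : ι → ℝ)
    (Δ : Finset L.Sentence) : Set (Finset L.Sentence) :=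
  {S | S ⊆ Δ ∧ PossibleSet M p S ∧
    ∀ T ⊆ Δ, PossibleSet M p T → T.card ≤ S.card}

/-- `⟨Δ⟩`: the possible indices satisfying some cardinality-maximal possible subset of `Δ`. -/
def angleSet (M : ι → Type*) [∀ i, L.Structure (M i)] (p : ι → ℝ)
    (Δ : Finset L.Sentence) : Set ι :=
  {i | 0 < p i ∧ ∃ S ∈ MPS M p Δ, SatAll M S i}

/-- `L(α|Δ) = (∑_{i∈⟨Δ⟩} ⟦α⟧ᵢ·p i) / (∑_{i∈⟨Δ⟩} p i)`. -/
noncomputable def Lcond (M : ι → Type*) [∀ i, L.Structure (M i)] (p : ι → ℝ)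
    (α : L.Sentence) (Δ : Finset L.Sentence) : ℝ :=
  (∑ᶠ i ∈ angleSet M p Δ, (ind M α i : ℝ) * p i) / (∑ᶠ i ∈ angleSet M p Δ, p i)

/-- `P_μ(α|Δ)`, with natural-number exponents (so `0 ^ 0 = 1`). -/
noncomputable def Pcond (M : ι → Type*) [∀ i, L.Structure (M i)] (p : ι → ℝ)
    (μ : ℝ) (α : L.Sentence) (Δ : Finset L.Sentence) : ℝ :=
  (∑ᶠ i, μ ^ (ind M α i) * (1 - μ) ^ (1 - ind M α i) *
      (μ ^ (nSat M Δ i) * (1 - μ) ^ (Δ.card - nSat M Δ i)) * p i) /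
  (∑ᶠ i, μ ^ (nSat M Δ i) * (1 - μ) ^ (Δ.card - nSat M Δ i) * p i)

/-- A finite set `S` of sentences is consistent if some index satisfies all of it. -/
def ConsistentSet (M : ι → Type*) [∀ i, L.Structure (M i)]
    (S : Finset L.Sentence) : Prop :=
  ∃ i, SatAll M S i

/-- `MCS Δ`: the cardinality-maximal consistent subsets of `Δ`. -/
def MCS (M : ι → Type*) [∀ i, L.Structure (M i)]
    (Δ : Finset L.Sentence) : Set (Finset L.Sentence) :=
  {S | S ⊆ Δ ∧ ConsistentSet M S ∧
    ∀ T ⊆ Δ, ConsistentSet M T → T.card ≤ S.card}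

/-- `⟪Δ⟫`: the indices satisfying some cardinality-maximal consistent subset of `Δ`. -/
def dangleSet (M : ι → Type*) [∀ i, L.Structure (M i)]
    (Δ : Finset L.Sentence) : Set ι :=
  {i | ∃ S ∈ MCS M Δ, SatAll M S i}

/-
Since `Δ` has a model, `Δ` is its own unique cardinality-maximal consistent
subset, so `⟪Δ⟫` is the set of models of `Δ`; by hypothesis this is also `⟨Δ⟩`. Every index of
`⟨Δ⟩` has positive weight, so the weighted average `L(α|Δ)` of `⟦α⟧` over the finite nonempty set
`⟨Δ⟩` is `1` exactly when `α` holds at every index of `⟨Δ⟩`, i.e. in every model of `Δ`.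
-/

section

variable {M : ι → Type*} [∀ i, L.Structure (M i)]

theorem MCS_eq_singleton_of_consistent {Δ : Finset L.Sentence} (hΔ : ConsistentSet M Δ) :
    MCS M Δ = {Δ} := by
  ext S
  refine ⟨fun ⟨hS, _, hmax⟩ => Finset.eq_of_subset_of_card_le hS (hmax Δ subset_rfl hΔ), ?_⟩
  rintro rfl
  exact ⟨subset_rfl, hΔ, fun _ hT _ => Finset.card_le_card hT⟩

theorem dangleSet_eq_of_consistent {Δ : Finset L.Sentence} (hΔ : ConsistentSet M Δ) :
    dangleSet M Δ = {i | SatAll M Δ i} := by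
  simp [dangleSet, MCS_eq_singleton_of_consistent hΔ]

theorem ind_mul_eq_self_iff {p : ι → ℝ} {α : L.Sentence} {i : ι} (hpi : 0 < p i) :
    (ind M α i : ℝ) * p i = p i ↔ Sat M α i := by
  rw [mul_eq_right₀ hpi.ne', ind]
  split_ifs with h <;> simp [h]

theorem ind_mul_le {p : ι → ℝ} {α : L.Sentence} {i : ι} (hpi : 0 ≤ p i) :
    (ind M α i : ℝ) * p i ≤ p i := by
  unfold ind
  split_ifs <;> simp [hpi]

theorem Lcond_eq_one_iff {p : ι → ℝ} {α : L.Sentence} {Δ : Finset L.Sentence}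
    (hfin : (angleSet M p Δ).Finite) (hne : (angleSet M p Δ).Nonempty) :
    Lcond M p α Δ = 1 ↔ ∀ i ∈ angleSet M p Δ, Sat M α i := by
  have hpos : ∀ i ∈ hfin.toFinset, 0 < p i := fun i hi => (hfin.mem_toFinset.1 hi).1
  have htotal : 0 < ∑ i ∈ hfin.toFinset, p i :=
    Finset.sum_pos hpos (hfin.toFinset_nonempty.2 hne)
  rw [Lcond, ← hfin.coe_toFinset, finsum_mem_coe_finset, finsum_mem_coe_finset,
    div_eq_one_iff_eq htotal.ne',
    Finset.sum_eq_sum_iff_of_le fun i hi => ind_mul_le (hpos i hi).le]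
  simp only [Set.Finite.mem_toFinset, Set.Finite.coe_toFinset]
  exact forall₂_congr fun i (hi : i ∈ angleSet M p Δ) => ind_mul_eq_self_iff hi.1

end

theorem stmt11_general
    (M : ι → Type*) [∀ i, L.Structure (M i)]
    (p : ι → ℝ) (hpfin : (Function.support p).Finite)
    (α : L.Sentence) (Δ : Finset L.Sentence)
    (heq : angleSet M p Δ = dangleSet M Δ)
    (hposs : ∃ i, 0 < p i ∧ SatAll M Δ i) :
    Lcond M p α Δ = 1 ↔ ∀ i, SatAll M Δ i → Sat M α i := by
  obtain ⟨i₀, -, hi₀⟩ := hposs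
  have hangle : angleSet M p Δ = {i | SatAll M Δ i} :=
    heq.trans (dangleSet_eq_of_consistent ⟨i₀, hi₀⟩)
  have hfin : (angleSet M p Δ).Finite :=
    hpfin.subset fun _ hi => hi.1.ne'
  rw [Lcond_eq_one_iff hfin (hangle ▸ ⟨i₀, hi₀⟩), hangle]
  rfl

/-- **Corollary** (certain reasoning at `μ → 1` recovers logical consequence): if
`⟨Δ⟩ = ⟪Δ⟫` and some possible index satisfies `Δ`, then `L(α|Δ) = 1` iff `Δ ⊨ α`. -/
theorem stmt11 [Countable ι]
    (M : ι → Type*) [∀ i, L.Structure (M i)] [∀ i, Nonempty (M i)]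
    (p : ι → ℝ) (hp0 : ∀ i, 0 ≤ p i) (hpfin : (Function.support p).Finite)
    (hp1 : ∑ᶠ i, p i = 1)
    (α : L.Sentence) (Δ : Finset L.Sentence)
    (heq : angleSet M p Δ = dangleSet M Δ)
    (hposs : ∃ i, 0 < p i ∧ SatAll M Δ i) :
    Lcond M p α Δ = 1 ↔ ∀ i, SatAll M Δ i → Sat M α i :=
  stmt11_general M p hpfin α Δ heq hposs
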